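/- Let S ⊆ ℕ be a finite set with 0 ∈ S and |S| = k ≥ 1. Then z_S ≤ (1/π)·√k·log(k), where log is the natural logarithm. -/

import Mathlib

/-!
The Lagrange identity `2 (g h - q²) = ∑_{e,f} (f - e)² t^(2e+2f-2)` gives
`E ≤ ∑_f f² t^(2f-2) A_f`, where `A_f` sums `t^(2e)` over the exponents `e < f` of `S`. On `[0,1]`
both `A_f` and `1 + c_f t^(2f)` are at most `g`, where `c_f` counts the nonzero exponents of `S` up
to `f`; hence `√E / g ≤ ∑_f f t^(f-1) / √(1 + c_f t^(2f))`, and the `f`-th term integrates to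
`arsinh √c_f / √c_f`. This is at most `u (c_f + 1) - u c_f` for `u x = √x log x`, and since
`f ↦ c_f` is injective from `S` into `{0, …, k - 1}`, these increments add up to at most
`u k = √k log k`.
-/

open Real Finset

/-- `g_S(t) = ∑_{e ∈ S} t^(2e)`. -/
noncomputable def gS (S : Finset ℕ) (t : ℝ) : ℝ := ∑ e ∈ S, t ^ (2 * e)

/-- `h_S(t) = ∑_{e ∈ S} e² t^(2e-2)` (the term for `e = 0` being `0`). -/
noncomputable def hS (S : Finset ℕ) (t : ℝ) : ℝ := ∑ e ∈ S, (e : ℝ) ^ 2 * t ^ (2 * e - 2)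

/-- `q_S(t) = ∑_{e ∈ S} e t^(2e-1)` (the term for `e = 0` being `0`). -/
noncomputable def qS (S : Finset ℕ) (t : ℝ) : ℝ := ∑ e ∈ S, (e : ℝ) * t ^ (2 * e - 1)

/-- `E_S(t) = g_S(t) h_S(t) - q_S(t)²`. -/
noncomputable def ES (S : Finset ℕ) (t : ℝ) : ℝ := gS S t * hS S t - qS S t ^ 2

/-- The expected number of real zeros in `(0,1)`, given by the Edelman–Kostlan integral. -/
noncomputable def zS (S : Finset ℕ) : ℝ :=
  (1 / Real.pi) * ∫ t in (0 : ℝ)..1, Real.sqrt (ES S t) / gS S t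

noncomputable def lowerPowSum (S : Finset ℕ) (f : ℕ) (t : ℝ) : ℝ :=
  ∑ e ∈ S with e < f, t ^ (2 * e)

def posRank (S : Finset ℕ) (f : ℕ) : ℕ := #{e ∈ S | 0 < e ∧ e ≤ f}

noncomputable def majorant (n : ℕ) (c t : ℝ) : ℝ := n * t ^ (n - 1) / √(1 + c * t ^ (2 * n))

noncomputable def sqrtMulLog (x : ℝ) : ℝ := √x * log x

lemma lagrange_term (t : ℝ) (e f : ℕ) :
    ((f : ℝ) - e) ^ 2 * t ^ (2 * e + 2 * f - 2) =
      t ^ (2 * e) * ((f : ℝ) ^ 2 * t ^ (2 * f - 2))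
        + (e : ℝ) ^ 2 * t ^ (2 * e - 2) * t ^ (2 * f)
        - 2 * ((e : ℝ) * t ^ (2 * e - 1)) * ((f : ℝ) * t ^ (2 * f - 1)) := by
  rcases e with _ | e <;> rcases f with _ | f
  · simp
  · simp
  · simp only [CharP.cast_eq_zero, mul_zero, add_zero, pow_zero, mul_one]
    ring
  · rw [show 2 * (e + 1) + 2 * (f + 1) - 2 = 2 * e + 2 * f + 2 by omega,
      show 2 * (e + 1) - 2 = 2 * e by omega, show 2 * (f + 1) - 2 = 2 * f by omega,
      show 2 * (e + 1) - 1 = 2 * e + 1 by omega, show 2 * (f + 1) - 1 = 2 * f + 1 by omega]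
    push_cast
    ring

lemma two_mul_ES_eq (S : Finset ℕ) (t : ℝ) :
    2 * ES S t = ∑ e ∈ S, ∑ f ∈ S, ((f : ℝ) - e) ^ 2 * t ^ (2 * e + 2 * f - 2) := by
  simp only [lagrange_term, sum_add_distrib, sum_sub_distrib, ← mul_sum, ← sum_mul]
  unfold ES gS hS qS
  ring

lemma sub_sq_mul_pow_le {t : ℝ} (ht : 0 ≤ t) {e f : ℕ} (hef : e < f) :
    ((f : ℝ) - e) ^ 2 * t ^ (2 * e + 2 * f - 2)
      ≤ (f : ℝ) ^ 2 * t ^ (2 * f - 2) * t ^ (2 * e) := by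
  rw [mul_assoc, ← pow_add, show 2 * f - 2 + 2 * e = 2 * e + 2 * f - 2 by omega]
  have : (e : ℝ) ≤ f := by exact_mod_cast hef.le
  gcongr
  nlinarith [e.cast_nonneg (α := ℝ)]

lemma ES_le_sum_lowerPowSum (S : Finset ℕ) {t : ℝ} (ht : 0 ≤ t) :
    ES S t ≤ ∑ f ∈ S, (f : ℝ) ^ 2 * t ^ (2 * f - 2) * lowerPowSum S f t := by
  set φ : ℕ → ℕ → ℝ := fun e f =>
    if e < f then (f : ℝ) ^ 2 * t ^ (2 * f - 2) * t ^ (2 * e) else 0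
  have hterm : ∀ e f : ℕ,
      ((f : ℝ) - e) ^ 2 * t ^ (2 * e + 2 * f - 2) ≤ φ e f + φ f e := by
    intro e f
    rcases lt_trichotomy e f with hef | rfl | hfe
    · simpa [φ, hef, hef.not_gt] using sub_sq_mul_pow_le ht hef
    · simp [φ]
    · rw [← neg_sub, neg_sq, add_comm (2 * e)]
      simpa [φ, hfe, hfe.not_gt] using sub_sq_mul_pow_le ht hfe
  have hrow : ∀ f : ℕ,
      ∑ e ∈ S, φ e f = (f : ℝ) ^ 2 * t ^ (2 * f - 2) * lowerPowSum S f t := by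
    intro f
    simp only [φ, lowerPowSum, ← sum_filter, mul_sum]
  have : 2 * ES S t ≤ 2 * ∑ f ∈ S, (f : ℝ) ^ 2 * t ^ (2 * f - 2) * lowerPowSum S f t :=
    calc 2 * ES S t = ∑ e ∈ S, ∑ f ∈ S, ((f : ℝ) - e) ^ 2 * t ^ (2 * e + 2 * f - 2) :=
          two_mul_ES_eq S t
      _ ≤ ∑ e ∈ S, ∑ f ∈ S, (φ e f + φ f e) :=
          sum_le_sum fun e _ => sum_le_sum fun f _ => hterm e f
      _ = 2 * ∑ f ∈ S, ∑ e ∈ S, φ e f := by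
          rw [two_mul]; simp only [sum_add_distrib]; rw [sum_comm]
      _ = _ := by simp only [hrow]
  linarith

lemma lowerPowSum_le_gS (S : Finset ℕ) (f : ℕ) (t : ℝ) : lowerPowSum S f t ≤ gS S t :=
  sum_le_sum_of_subset_of_nonneg (filter_subset _ _) fun e _ _ => (even_two_mul e).pow_nonneg t

lemma one_le_gS {S : Finset ℕ} (h0 : 0 ∈ S) (t : ℝ) : 1 ≤ gS S t := by
  simpa [gS] using single_le_sum (fun e _ => (even_two_mul e).pow_nonneg t) h0

lemma one_add_posRank_mul_le_gS {S : Finset ℕ} (h0 : 0 ∈ S) (f : ℕ) {t : ℝ}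
    (ht : t ∈ Set.Icc (0 : ℝ) 1) : 1 + posRank S f * t ^ (2 * f) ≤ gS S t := by
  rw [gS, ← sum_filter_add_sum_filter_not S (fun e => 0 < e ∧ e ≤ f), add_comm (1 : ℝ)]
  gcongr ?_ + ?_
  · rw [posRank, ← nsmul_eq_mul]
    exact card_nsmul_le_sum _ _ _ fun e he =>
      pow_le_pow_of_le_one ht.1 ht.2 (by have := (mem_filter.1 he).2.2; omega)
  · simpa using single_le_sum (fun e _ => (even_two_mul e).pow_nonneg t)
      (mem_filter.2 ⟨h0, by simp⟩ : 0 ∈ {e ∈ S | ¬(0 < e ∧ e ≤ f)})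

lemma majorant_nonneg (n : ℕ) {c t : ℝ} (ht : 0 ≤ t) : 0 ≤ majorant n c t := by
  unfold majorant; positivity

lemma sq_mul_lowerPowSum_le {S : Finset ℕ} (h0 : 0 ∈ S) (f : ℕ) {t : ℝ}
    (ht : t ∈ Set.Icc (0 : ℝ) 1) :
    (f : ℝ) ^ 2 * t ^ (2 * f - 2) * lowerPowSum S f t
      ≤ (gS S t * majorant f (posRank S f) t) ^ 2 := by
  have hB : 0 < 1 + (posRank S f : ℝ) * t ^ (2 * f) := by
    have := (even_two_mul f).pow_nonneg t; positivity
  have hAB : lowerPowSum S f t * (1 + posRank S f * t ^ (2 * f)) ≤ gS S t ^ 2 := by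
    rw [sq]
    exact mul_le_mul (lowerPowSum_le_gS S f t) (one_add_posRank_mul_le_gS h0 f ht) hB.le
      (zero_le_one.trans (one_le_gS h0 t))
  rw [majorant, mul_div_assoc', div_pow, sq_sqrt hB.le, le_div_iff₀ hB,
    show 2 * f - 2 = 2 * (f - 1) by omega, pow_mul']
  calc (f : ℝ) ^ 2 * (t ^ (f - 1)) ^ 2 * lowerPowSum S f t * (1 + posRank S f * t ^ (2 * f))
      = ((f : ℝ) * t ^ (f - 1)) ^ 2 * (lowerPowSum S f t * (1 + posRank S f * t ^ (2 * f))) := by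
        ring
    _ ≤ ((f : ℝ) * t ^ (f - 1)) ^ 2 * gS S t ^ 2 := by gcongr
    _ = (gS S t * (f * t ^ (f - 1))) ^ 2 := by ring

lemma sqrt_ES_div_gS_le {S : Finset ℕ} (h0 : 0 ∈ S) {t : ℝ} (ht : t ∈ Set.Icc (0 : ℝ) 1) :
    √(ES S t) / gS S t ≤ ∑ f ∈ S, majorant f (posRank S f) t := by
  have hg : 0 < gS S t := zero_lt_one.trans_le (one_le_gS h0 t)
  have hm : ∀ f ∈ S, 0 ≤ gS S t * majorant f (posRank S f) t :=
    fun f _ => mul_nonneg hg.le (majorant_nonneg f ht.1)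
  have hES : ES S t ≤ (gS S t * ∑ f ∈ S, majorant f (posRank S f) t) ^ 2 :=
    calc ES S t ≤ ∑ f ∈ S, (f : ℝ) ^ 2 * t ^ (2 * f - 2) * lowerPowSum S f t :=
          ES_le_sum_lowerPowSum S ht.1
      _ ≤ ∑ f ∈ S, (gS S t * majorant f (posRank S f) t) ^ 2 :=
          sum_le_sum fun f _ => sq_mul_lowerPowSum_le h0 f ht
      _ ≤ (∑ f ∈ S, gS S t * majorant f (posRank S f) t) ^ 2 := sum_sq_le_sq_sum_of_nonneg hm
      _ = _ := by rw [mul_sum]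
  rw [div_le_iff₀' hg]
  exact sqrt_le_iff.2 ⟨mul_nonneg hg.le (sum_nonneg fun f _ => majorant_nonneg f ht.1), hES⟩

lemma continuous_majorant (n : ℕ) {c : ℝ} (hc : 0 ≤ c) : Continuous (majorant n c) := by
  refine Continuous.div (by fun_prop) (by fun_prop) fun t => ?_
  have := (even_two_mul n).pow_nonneg t
  positivity

lemma integral_majorant {n : ℕ} (hn : 1 ≤ n) {c : ℝ} (hc : 0 < c) :
    ∫ t in (0 : ℝ)..1, majorant n c t = arsinh √c / √c := by
  have hsc : 0 < √c := sqrt_pos.2 hc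
  have hderiv : ∀ t ∈ Set.uIcc (0 : ℝ) 1,
      HasDerivAt (fun t => arsinh (√c * t ^ n) / √c) (majorant n c t) t := by
    intro t _
    have h := ((hasDerivAt_arsinh _).comp t ((hasDerivAt_pow n t).const_mul √c)).div_const √c
    refine h.congr_deriv ?_
    rw [majorant, mul_pow, sq_sqrt hc.le, ← pow_mul, mul_comm 2 n]
    field_simp
  rw [intervalIntegral.integral_eq_sub_of_hasDerivAt hderiv
    ((continuous_majorant n hc.le).intervalIntegrable 0 1)]
  simp [zero_pow (by omega : n ≠ 0)]

-- Multiplied by `2 b (a + b)²`, and using `(b - a) (a + b) = 1`, this is a cubic inequality.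
lemma log_two_le_of_sq_eq_sq_add_one {a b : ℝ} (ha : 0 < a) (ha2 : 2 ≤ a ^ 2) (hb : 0 < b)
    (hab : b ^ 2 = a ^ 2 + 1) :
    log 2 ≤ (1 - (a + b) / (2 * b)) + 2 * a ^ 2 * (1 - a / b) - (b - 1) * (b - a) ^ 2 := by
  have hb3 : 1.73 ≤ b := by nlinarith
  have hba : (b - a) * (a + b) = 1 := by linear_combination hab
  have hlog2 : 2 * log 2 * b * (a + b) ^ 2 ≤ 1.4 * b * (a + b) ^ 2 := by
    gcongr; linarith [log_two_lt_d9]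
  rw [← sub_nonneg]
  refine nonneg_of_mul_nonneg_left ?_ (by positivity : 0 < 2 * b * (a + b) ^ 2)
  have e : ((1 - (a + b) / (2 * b)) + 2 * a ^ 2 * (1 - a / b) - (b - 1) * (b - a) ^ 2 - log 2)
      * (2 * b * (a + b) ^ 2)
      = (1 + 4 * a ^ 2) * (a + b) - 2 * b * (b - 1) - 2 * log 2 * b * (a + b) ^ 2 := by
    field_simp
    linear_combination
      ((1 + 4 * a ^ 2) * (a + b) - 2 * b * (b - 1) * ((b - a) * (a + b) + 1)) * hba
  rw [e]
  nlinarith [mul_nonneg (sq_nonneg a) (by linarith : (0 : ℝ) ≤ 1.2 * b - 2),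
    mul_nonneg ha.le (by linarith : (0 : ℝ) ≤ a ^ 2 - 2)]

lemma arsinh_sqrt_div_sqrt_le {x : ℝ} (hx : 2 ≤ x) :
    arsinh √x / √x ≤ sqrtMulLog (x + 1) - sqrtMulLog x := by
  set a := √x
  set b := √(x + 1)
  have ha2 : a ^ 2 = x := sq_sqrt (by linarith)
  have hb2 : b ^ 2 = x + 1 := sq_sqrt (by linarith)
  have ha0 : 0 < a := sqrt_pos.2 (by linarith)
  have hab : a < b := sqrt_lt_sqrt (by linarith) (by linarith)
  have hb0 : 0 < b := ha0.trans hab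
  have hlog_ab : log (a + b) ≤ log 2 + log b + ((a + b) / (2 * b) - 1) := by
    have := log_le_sub_one_of_pos (show 0 < (a + b) / (2 * b) by positivity)
    rw [log_div (by positivity) (by positivity), log_mul two_ne_zero hb0.ne'] at this
    linarith
  have hlog_a : log a ≤ log b + (a / b - 1) := by
    have := log_le_sub_one_of_pos (div_pos ha0 hb0)
    rw [log_div ha0.ne' hb0.ne'] at this
    linarith
  have hlog_b : log b * (b - a) ^ 2 ≤ (b - 1) * (b - a) ^ 2 :=
    mul_le_mul_of_nonneg_right (log_le_sub_one_of_pos hb0) (sq_nonneg _)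
  have hlog2 := log_two_le_of_sq_eq_sq_add_one ha0 (by linarith) hb0 (by linarith)
  have harsinh : arsinh a = log (a + b) := by
    rw [arsinh, ha2, add_comm 1 x]
  rw [sqrtMulLog, sqrtMulLog, ← hb2, ← ha2, log_pow, log_pow, sqrt_sq hb0.le, sqrt_sq ha0.le,
    harsinh, div_le_iff₀ ha0]
  push_cast
  have e : log b * (b - a) ^ 2 = log b * (1 + 2 * a ^ 2 - 2 * a * b) := by
    linear_combination log b * (hb2 - ha2)
  linarith [mul_le_mul_of_nonneg_left hlog_a (by positivity : (0 : ℝ) ≤ 2 * a ^ 2)]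

lemma arsinh_one_le : arsinh 1 ≤ √2 * log 2 := by
  have hs : 1 < √2 := by rw [lt_sqrt zero_le_one]; norm_num
  have h := log_le_sub_one_of_pos (show 0 < (1 + √2) / 2 by positivity)
  rw [log_div (by positivity) two_ne_zero] at h
  rw [arsinh, one_pow, one_add_one_eq_two]
  nlinarith [log_two_gt_d9]

-- `arsinh_sqrt_div_sqrt_le` is too lossy at `c = 1`, which is checked directly.
lemma arsinh_sqrt_natCast_div_sqrt_le {c : ℕ} (hc : 1 ≤ c) :
    arsinh √c / √c ≤ sqrtMulLog ↑(c + 1) - sqrtMulLog c := by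
  push_cast
  rcases hc.eq_or_lt with rfl | hc
  · simpa [sqrtMulLog, one_add_one_eq_two] using arsinh_one_le
  · exact arsinh_sqrt_div_sqrt_le (by exact_mod_cast hc)

lemma monotone_sqrtMulLog_natCast : Monotone fun n : ℕ => sqrtMulLog n := by
  refine monotone_nat_of_le_succ fun n => ?_
  rcases n.eq_zero_or_pos with rfl | hn
  · simp [sqrtMulLog]
  · have hn : (1 : ℝ) ≤ n := by exact_mod_cast hn
    unfold sqrtMulLog
    push_cast
    have := log_nonneg hn
    gcongr <;> linarith

lemma sum_sub_le_of_injOn {ι : Type*} {F : ℕ → ℝ} (hF : Monotone F) {s : Finset ι}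
    {c : ι → ℕ} {n : ℕ} (hinj : Set.InjOn c s) (hlt : ∀ i ∈ s, c i < n) :
    ∑ i ∈ s, (F (c i + 1) - F (c i)) ≤ F n - F 0 := by
  classical
  rw [← sum_image hinj (f := fun j => F (j + 1) - F j), ← sum_range_sub]
  refine sum_le_sum_of_subset_of_nonneg ?_ fun j _ _ => sub_nonneg.2 (hF j.le_succ)
  intro j hj
  obtain ⟨i, hi, rfl⟩ := mem_image.1 hj
  exact mem_range.2 (hlt i hi)

lemma posRank_lt_card {S : Finset ℕ} (h0 : 0 ∈ S) (f : ℕ) : posRank S f < #S :=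
  card_lt_card (filter_ssubset.2 ⟨0, h0, by simp⟩)

lemma one_le_posRank {S : Finset ℕ} {f : ℕ} (hf : f ∈ S) (hf0 : 0 < f) : 1 ≤ posRank S f :=
  card_pos.2 ⟨f, mem_filter.2 ⟨hf, hf0, le_rfl⟩⟩

lemma strictMonoOn_posRank (S : Finset ℕ) : StrictMonoOn (posRank S) S := by
  intro e _ f hf hef
  refine card_lt_card (ssubset_iff_of_subset ?_ |>.2 ⟨f, ?_, ?_⟩)
  · exact monotone_filter_right _ fun x _ hx => ⟨hx.1, hx.2.trans hef.le⟩
  · exact mem_filter.2 ⟨hf, by omega, le_rfl⟩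
  · simp [hef]

lemma integral_majorant_posRank_le {S : Finset ℕ} {f : ℕ} (hf : f ∈ S) :
    ∫ t in (0 : ℝ)..1, majorant f (posRank S f) t
      ≤ sqrtMulLog ↑(posRank S f + 1) - sqrtMulLog (posRank S f) := by
  rcases f.eq_zero_or_pos with rfl | hf0
  · simpa [majorant] using monotone_sqrtMulLog_natCast (posRank S 0).le_succ
  · have hc := one_le_posRank hf hf0
    rw [integral_majorant hf0 (by exact_mod_cast hc)]
    exact arsinh_sqrt_natCast_div_sqrt_le hc

lemma continuous_sqrt_ES_div_gS {S : Finset ℕ} (h0 : 0 ∈ S) :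
    Continuous fun t => √(ES S t) / gS S t := by
  refine Continuous.div ?_ (by unfold gS; fun_prop) fun t => (one_pos.trans_le (one_le_gS h0 t)).ne'
  unfold ES gS hS qS
  fun_prop

theorem stmt17_general (S : Finset ℕ) (k : ℕ) (h0 : 0 ∈ S) (hcard : S.card = k) :
    zS S ≤ (1 / Real.pi) * Real.sqrt k * Real.log k := by
  have hm : ∀ f ∈ S, Continuous (majorant f (posRank S f)) :=
    fun f _ => continuous_majorant f (Nat.cast_nonneg _)
  have hint : ∫ t in (0 : ℝ)..1, √(ES S t) / gS S t
      ≤ ∑ f ∈ S, ∫ t in (0 : ℝ)..1, majorant f (posRank S f) t := by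
    rw [← intervalIntegral.integral_finsetSum fun f hf => (hm f hf).intervalIntegrable 0 1]
    exact intervalIntegral.integral_mono_on zero_le_one
      ((continuous_sqrt_ES_div_gS h0).intervalIntegrable 0 1)
      ((continuous_finsetSum S hm).intervalIntegrable 0 1) fun t ht => sqrt_ES_div_gS_le h0 ht
  have htel : ∑ f ∈ S, (sqrtMulLog ↑(posRank S f + 1) - sqrtMulLog (posRank S f))
      ≤ √k * log k := by
    simpa [sqrtMulLog] using sum_sub_le_of_injOn monotone_sqrtMulLog_natCast
      (strictMonoOn_posRank S).injOn fun f _ => hcard ▸ posRank_lt_card h0 f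
  calc zS S ≤ (1 / π) * ∑ f ∈ S, ∫ t in (0 : ℝ)..1, majorant f (posRank S f) t := by
        unfold zS; gcongr
    _ ≤ (1 / π) * (√k * log k) := by
        gcongr
        exact (sum_le_sum fun f hf => integral_majorant_posRank_le hf).trans htel
    _ = (1 / π) * √k * log k := by ring

theorem stmt17 (S : Finset ℕ) (k : ℕ) (h0 : 0 ∈ S) (hcard : S.card = k) (hk : 1 ≤ k) :
    zS S ≤ (1 / Real.pi) * Real.sqrt k * Real.log k :=
  stmt17_general S k h0 hcard
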